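/- arXiv:0704.0380 — 7 statements merged into one kernel-verified Lean document; each statement's English description precedes it below -/
import Mathlib

section
/- Let θ > 8r > 0, a > 0, ρ ≥ 0, and for λ ∈ (λ_min, 0) with λ_min = -√((θ-8r)/(4a)) define μ_λ = (1/2)√(θ(θ-8r-4aλ²)), ψ_λ⁻ = 1/4 - μ_λ/(2θ), and E_λ⁻ = ρ + θψ_λ⁻. Then for every γ ≥ 0, the infimum of E_λ⁻ + λγ over λ ∈ (λ_min, 0) equals Δ(γ) := ρ + θ/4 - (1/4)√(a⁻¹(θ-8r)(4γ² + θa)). -/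
noncomputable def lamMin (θ r a : ℝ) : ℝ := -Real.sqrt ((θ - 8*r)/(4*a))
noncomputable def muLam (θ r a l : ℝ) : ℝ := (1/2) * Real.sqrt (θ*(θ - 8*r - 4*a*l^2))
noncomputable def psiMinus (θ r a l : ℝ) : ℝ := 1/4 - muLam θ r a l / (2*θ)
noncomputable def Eminus (θ r a ρ l : ℝ) : ℝ := ρ + θ * psiMinus θ r a l

theorem stmt0 (θ r a ρ : ℝ) (hr : 0 < r) (hθ : 8*r < θ) (ha : 0 < a) (hρ : 0 ≤ ρ)
    (γ : ℝ) (hγ : 0 ≤ γ) :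
    IsGLB ((fun l => Eminus θ r a ρ l + l * γ) '' Set.Ioo (lamMin θ r a) 0)
      (ρ + θ/4 - (1/4) * Real.sqrt (a⁻¹ * (θ - 8*r) * (4*γ^2 + θ*a))) := by
  have hθ0 : 0 < θ := by linarith
  have hb : 0 < θ - 8*r := by linarith
  have hK : 0 < a*θ + 4*γ^2 := by positivity
  have hE : ∀ l : ℝ, Eminus θ r a ρ l = ρ + θ/4 - Real.sqrt (θ*(θ - 8*r - 4*a*l^2))/4 := by
    intro l
    unfold Eminus psiMinus muLam
    field_simp
    ring
  have hlam : lamMin θ r a < 0 := by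
    unfold lamMin
    simp only [neg_neg, Left.neg_neg_iff]
    exact Real.sqrt_pos.mpr (by positivity)
  constructor
  · rintro y ⟨l, ⟨hl1, hl2⟩, rfl⟩
    simp only
    rw [hE]
    set S := Real.sqrt (θ*(θ - 8*r - 4*a*l^2)) with hSdef
    have h4 : 4*a*l^2 < θ - 8*r := by
      have hsp : 0 < Real.sqrt ((θ - 8*r)/(4*a)) := Real.sqrt_pos.mpr (by positivity)
      have : l^2 < (Real.sqrt ((θ - 8*r)/(4*a)))^2 := by
        apply sq_lt_sq' _ (lt_trans hl2 hsp)
        · unfold lamMin at hl1; linarith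
      rw [Real.sq_sqrt (by positivity)] at this
      have := (lt_div_iff₀ (by positivity : (0:ℝ) < 4*a)).mp this
      linarith
    have hS0 : 0 ≤ S := Real.sqrt_nonneg _
    have hS2 : S^2 = θ*(θ - 8*r - 4*a*l^2) := Real.sq_sqrt (by nlinarith)
    have key : S - 4*l*γ ≤ Real.sqrt (a⁻¹ * (θ - 8*r) * (4*γ^2 + θ*a)) := by
      have h0 : 0 ≤ S - 4*l*γ := by nlinarith
      have hsq : (S - 4*l*γ)^2 ≤ a⁻¹ * (θ - 8*r) * (4*γ^2 + θ*a) := by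
        rw [show a⁻¹ * (θ - 8*r) * (4*γ^2 + θ*a) = ((θ - 8*r) * (a*θ + 4*γ^2))/a by
          rw [eq_div_iff ha.ne', inv_mul_eq_div, div_mul_eq_mul_div, div_mul_eq_mul_div,
            div_eq_iff ha.ne']; ring, le_div_iff₀ ha]
        have hR0 : (0:ℝ) ≤ 4*(θ-8*r)*γ^2 + 4*a^2*θ*l^2 - 16*a*l^2*γ^2 := by
          have ht := mul_le_mul_of_nonneg_right h4.le (by positivity : (0:ℝ) ≤ 4*γ^2)
          nlinarith [sq_nonneg (a*l)]
        have hx0 : (0:ℝ) ≤ -(8*l*γ*S)*a := by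
          have h8 : 0 ≤ -(8*l) := by linarith
          have := mul_nonneg (mul_nonneg (mul_nonneg h8 hγ) hS0) ha.le
          nlinarith [this]
        have hsq2 : (-(8*l*γ*S)*a)^2 ≤ (4*(θ-8*r)*γ^2 + 4*a^2*θ*l^2 - 16*a*l^2*γ^2)^2 := by
          rw [show (-(8*l*γ*S)*a)^2 = 64*l^2*γ^2*a^2*S^2 from by ring, hS2]
          nlinarith [sq_nonneg (4*(θ-8*r)*γ^2 - 4*a^2*θ*l^2 - 16*a*l^2*γ^2)]
        have hmid : -(8*l*γ*S)*a ≤ 4*(θ-8*r)*γ^2 + 4*a^2*θ*l^2 - 16*a*l^2*γ^2 := by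
          calc -(8*l*γ*S)*a = Real.sqrt ((-(8*l*γ*S)*a)^2) := (Real.sqrt_sq hx0).symm
            _ ≤ Real.sqrt ((4*(θ-8*r)*γ^2 + 4*a^2*θ*l^2 - 16*a*l^2*γ^2)^2) :=
                Real.sqrt_le_sqrt hsq2
            _ = _ := Real.sqrt_sq hR0
        have hS2a : a*S^2 = a*(θ*(θ - 8*r - 4*a*l^2)) := by rw [hS2]
        nlinarith [hmid, hS2a]
      calc S - 4*l*γ = Real.sqrt ((S - 4*l*γ)^2) := (Real.sqrt_sq h0).symm
        _ ≤ _ := Real.sqrt_le_sqrt hsq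
    linarith
  · intro c hc
    obtain ⟨s, hsdef⟩ : ∃ s : ℝ, s = Real.sqrt ((θ - 8*r)/(a*(a*θ+4*γ^2))) := ⟨_, rfl⟩
    have hs0 : 0 ≤ s := hsdef ▸ Real.sqrt_nonneg _
    have hs2 : s^2 = (θ - 8*r)/(a*(a*θ+4*γ^2)) := by
      rw [hsdef]; exact Real.sq_sqrt (by positivity)
    obtain ⟨L, hLdef⟩ : ∃ L : ℝ, L = -(γ*s) := ⟨_, rfl⟩
    have hg : Continuous (fun l : ℝ => Eminus θ r a ρ l + l * γ) := by
      unfold Eminus psiMinus muLam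
      fun_prop
    have hLmem : L ∈ closure (Set.Ioo (lamMin θ r a) 0) := by
      rw [closure_Ioo (ne_of_lt hlam)]
      constructor
      · unfold lamMin
        rw [hLdef, neg_le_neg_iff]
        calc γ * s = Real.sqrt (γ^2 * ((θ - 8*r)/(a*(a*θ+4*γ^2)))) := by
              rw [Real.sqrt_mul (sq_nonneg γ), Real.sqrt_sq hγ, hsdef]
          _ ≤ Real.sqrt ((θ - 8*r)/(4*a)) := by
              apply Real.sqrt_le_sqrt
              rw [mul_div_assoc', div_le_div_iff₀ (by positivity) (by positivity)]
              nlinarith [mul_pos (mul_pos (mul_pos ha ha) hθ0) hb, sq_nonneg (γ*a)]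
      · rw [hLdef]
        simp only [Set.mem_Icc, neg_nonpos]
        positivity
    have hval : Eminus θ r a ρ L + L * γ
        = ρ + θ/4 - (1/4) * Real.sqrt (a⁻¹ * (θ - 8*r) * (4*γ^2 + θ*a)) := by
      rw [hE]
      have hL2 : L^2 = γ^2 * ((θ - 8*r)/(a*(a*θ+4*γ^2))) := by
        rw [hLdef, show (-(γ*s))^2 = γ^2 * s^2 from by ring, hs2]
      have h1 : θ*(θ - 8*r - 4*a*L^2) = (a*θ)^2 * ((θ - 8*r)/(a*(a*θ+4*γ^2))) := by
        have hne : (a*(a*θ+4*γ^2)) ≠ 0 := by positivity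
        rw [hL2]
        field_simp
        ring
      have h2 : a⁻¹ * (θ - 8*r) * (4*γ^2 + θ*a)
          = (a*θ+4*γ^2)^2 * ((θ - 8*r)/(a*(a*θ+4*γ^2))) := by
        rw [mul_div_assoc', eq_div_iff (by positivity : (a*(a*θ+4*γ^2)) ≠ 0), inv_mul_eq_div,
          div_mul_eq_mul_div, div_mul_eq_mul_div, div_eq_iff ha.ne']
        ring
      rw [h1, h2, Real.sqrt_mul (sq_nonneg _), Real.sqrt_mul (sq_nonneg _),
        Real.sqrt_sq (by positivity : (0:ℝ) ≤ a*θ), Real.sqrt_sq hK.le, ← hsdef, hLdef]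
      ring
    have hmem : (ρ + θ/4 - (1/4) * Real.sqrt (a⁻¹ * (θ - 8*r) * (4*γ^2 + θ*a)))
        ∈ closure ((fun l => Eminus θ r a ρ l + l * γ) '' Set.Ioo (lamMin θ r a) 0) := by
      rw [← hval]
      exact image_closure_subset_closure_image hg ⟨L, hLmem, rfl⟩
    have hc' : c ∈ lowerBounds
        (closure ((fun l => Eminus θ r a ρ l + l * γ) '' Set.Ioo (lamMin θ r a) 0)) := by
      rwa [lowerBounds_closure]
    exact hc' hmem
end

section
/- With the notation above, the infimum inf_{λ∈(λ_min,0)} {E_λ⁻ + λγ} is attained at λ_γ = -γ√((θ-8r)/(θa² + 4aγ²)), and at this point the derivative of λ ↦ E_λ⁻ equals -γ. -/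
noncomputable def lamGamma (θ r a γ : ℝ) : ℝ := -γ * Real.sqrt ((θ - 8*r)/(θ*a^2 + 4*a*γ^2))


private lemma aux_min (a θ γ s l l0 u v : ℝ) (hv : 0 < v) (hu : 0 ≤ u)
    (hu2 : u^2 = θ*(s - 4*a*l^2)) (hv2 : v^2 = θ*(s - 4*a*l0^2))
    (hγv : γ*v = -(a*θ*l0)) (haθ : 0 ≤ a*θ) :
    -(v/4) + l0*γ ≤ -(u/4) + l*γ := by
  have key : 8*v*((-(u/4) + l*γ) - (-(v/4) + l0*γ)) = (u - v)^2 + 4*(a*θ)*(l - l0)^2 := by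
    linear_combination 8*(l - l0)*hγv + hv2 - hu2
  nlinarith [key, sq_nonneg (u - v), mul_nonneg haθ (sq_nonneg (l - l0)), hv]

private lemma aux_deriv (θ a γ l0 v : ℝ) (hvne : v ≠ 0) (hθne : θ ≠ 0)
    (hγv : γ * v = -(a * θ * l0)) :
    θ * -(1 / 2 * (-(8 * a * θ * l0) / (2 * v)) / (2 * θ)) = -γ := by
  field_simp
  linear_combination 8*hγv

theorem stmt1 (θ r a ρ : ℝ) (hr : 0 ≤ r) (hθ : 8*r < θ) (ha : 0 < a) (hρ : 0 ≤ ρ)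
    (γ : ℝ) (hγ : 0 < γ) :
    lamGamma θ r a γ ∈ Set.Ioo (lamMin θ r a) 0 ∧
    IsLeast ((fun l => Eminus θ r a ρ l + l * γ) '' Set.Ioo (lamMin θ r a) 0)
      (Eminus θ r a ρ (lamGamma θ r a γ) + lamGamma θ r a γ * γ) ∧
    deriv (fun l => Eminus θ r a ρ l) (lamGamma θ r a γ) = -γ := by
  have hθ0 : 0 < θ := by linarith
  have hs : 0 < θ - 8*r := by linarith
  have hD : 0 < θ*a^2 + 4*a*γ^2 := by positivity
  set t := Real.sqrt ((θ - 8*r)/(θ*a^2 + 4*a*γ^2)) with ht_def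
  have ht : 0 < t := Real.sqrt_pos.mpr (div_pos hs hD)
  have ht2 : t^2 = (θ - 8*r)/(θ*a^2 + 4*a*γ^2) := Real.sq_sqrt (le_of_lt (div_pos hs hD))
  set l0 := lamGamma θ r a γ with hl0_def
  have hl0 : l0 = -γ * t := rfl
  have hl0neg : l0 < 0 := by rw [hl0]; nlinarith
  set m := Real.sqrt ((θ - 8*r)/(4*a)) with hm_def
  have hm : 0 < m := Real.sqrt_pos.mpr (div_pos hs (by positivity))
  have hm2 : m^2 = (θ - 8*r)/(4*a) := Real.sq_sqrt (le_of_lt (div_pos hs (by positivity)))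
  have hmin : lamMin θ r a = -m := rfl
  -- l0 ∈ (lamMin, 0)
  have ht2' : t^2 * (θ*a^2 + 4*a*γ^2) = θ - 8*r := by
    rw [ht2]; field_simp
  have hm2' : m^2 * (4*a) = θ - 8*r := by rw [hm2]; field_simp
  have hcmp : γ * t < m := by
    have h4a : 4*a*(m^2 - (γ*t)^2) = θ*a^2*t^2 := by linear_combination hm2' - ht2'
    have hsq : (γ*t)^2 < m^2 := by
      nlinarith [h4a, mul_pos (mul_pos hθ0 (pow_pos ha 2)) (pow_pos ht 2), ha]
    nlinarith [mul_pos hγ ht]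
  have hmem : l0 ∈ Set.Ioo (lamMin θ r a) 0 := by
    constructor
    · rw [hmin, hl0]; linarith
    · exact hl0neg
  -- key quantities
  set v := θ * a * t with hv_def
  have hv : 0 < v := by positivity
  have hv2 : v^2 = θ*(θ - 8*r - 4*a*l0^2) := by
    have hl0sq : l0^2 = γ^2 * t^2 := by rw [hl0]; ring
    linear_combination θ * ht2' + 4*a*θ*hl0sq
  have hγv : γ * v = -(a*θ*l0) := by rw [hl0, hv_def]; ring
  have hQ : 0 < θ*(θ - 8*r - 4*a*l0^2) := by rw [← hv2]; positivity
  have hsqrtQ : Real.sqrt (θ*(θ - 8*r - 4*a*l0^2)) = v := by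
    rw [← hv2, Real.sqrt_sq hv.le]
  -- formula for Eminus
  have hEfun : ∀ x : ℝ, Eminus θ r a ρ x = ρ + θ/4 - Real.sqrt (θ*(θ - 8*r - 4*a*x^2))/4 := by
    intro x
    unfold Eminus psiMinus muLam
    field_simp
    ring
  clear_value t l0 m v
  refine ⟨hmem, ⟨⟨l0, hmem, rfl⟩, ?_⟩, ?_⟩
  · -- lower bound
    rintro y ⟨l, ⟨hl1, hl2⟩, rfl⟩
    rw [hmin] at hl1
    have hlsq : l^2 < m^2 := by nlinarith [hl1, hl2, hm]
    have hrad : 0 ≤ θ*(θ - 8*r - 4*a*l^2) := by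
      have h1 : 4*a*l^2 < 4*a*m^2 :=
        mul_lt_mul_of_pos_left hlsq (by positivity : (0:ℝ) < 4*a)
      have h2 : (0:ℝ) ≤ θ - 8*r - 4*a*l^2 := by linarith [hm2']
      positivity
    set u := Real.sqrt (θ*(θ - 8*r - 4*a*l^2)) with hu_def
    have hu : 0 ≤ u := Real.sqrt_nonneg _
    have hu2 : u^2 = θ*(θ - 8*r - 4*a*l^2) := Real.sq_sqrt hrad
    have haux := aux_min a θ γ (θ - 8*r) l l0 u v hv hu hu2 hv2 hγv
      (by positivity)
    show Eminus θ r a ρ l0 + l0 * γ ≤ Eminus θ r a ρ l + l * γ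
    rw [hEfun l, hEfun l0, hsqrtQ]
    linarith [haux]
  · -- derivative
    have hg : HasDerivAt (fun x : ℝ => θ*(θ - 8*r - 4*a*x^2)) (-(8*a*θ*l0)) l0 := by
      have h1 : HasDerivAt (fun x : ℝ => x^2) (2*l0) l0 := by
        simpa using hasDerivAt_pow 2 l0
      have h2 := ((h1.const_mul (4*a)).const_sub (θ - 8*r)).const_mul θ
      refine h2.congr_deriv ?_
      ring
    have hsq2 : HasDerivAt (fun x : ℝ => Real.sqrt (θ*(θ - 8*r - 4*a*x^2)))
        (-(8*a*θ*l0) / (2*v)) l0 := by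
      have h := hg.sqrt hQ.ne'
      convert h using 2
      rw [hsqrtQ]
    have h := ((((hsq2.const_mul (1/2)).div_const (2*θ)).const_sub (1/4)).const_mul θ).const_add ρ
    have hvne : v ≠ 0 := hv.ne'
    have hfun : (fun l => Eminus θ r a ρ l)
        = (fun x : ℝ => ρ + θ * (1/4 - 1/2 * Real.sqrt (θ*(θ - 8*r - 4*a*x^2)) / (2*θ))) := by
      funext x
      rw [hEfun x]
      field_simp
      ring
    rw [hfun, h.deriv]
    exact aux_deriv θ a γ l0 v hvne hθ0.ne' hγv
end

section
/- Let θ > 8r > 0, a > 0, ρ ≥ 0, and define ψ_λ⁺ = 1/4 + μ_λ/(2θ), E_λ⁻ = ρ + θψ_λ⁻ as above. For γ, κ ≥ 0, the infimum of E_λ⁻ + λγ - κ²ψ_λ⁺ over λ ∈ (λ_min, 0) equals Δ(γ,κ) := ρ + (θ-κ²)/4 - (1/(4θa))√(θ(θ-8r)(4aθγ² + a²(θ+κ²)²)). -/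
noncomputable def psiPlus (θ r a l : ℝ) : ℝ := 1/4 + muLam θ r a l / (2*θ)
set_option maxHeartbeats 1000000 in
theorem stmt2 (θ r a ρ : ℝ) (hr : 0 < r) (hθ : 8*r < θ) (ha : 0 < a) (hρ : 0 ≤ ρ)
    (γ κ : ℝ) (hγ : 0 ≤ γ) (hκ : 0 ≤ κ) :
    IsGLB ((fun l => Eminus θ r a ρ l + l * γ - κ^2 * psiPlus θ r a l) ''
        Set.Ioo (lamMin θ r a) 0)
      (ρ + (θ - κ^2)/4 -
        (1/(4*θ*a)) * Real.sqrt (θ*(θ - 8*r)*(4*a*θ*γ^2 + a^2*(θ + κ^2)^2))) := by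
  have hθ0 : (0:ℝ) < θ := by linarith
  have hb : (0:ℝ) < θ - 8*r := by linarith
  have hκθ : (0:ℝ) < θ + κ^2 := by positivity
  set D : ℝ := 4*a*θ*γ^2 + a^2*(θ + κ^2)^2 with hDdef
  have hD0 : 0 < D := by positivity
  set u : ℝ := Real.sqrt (θ*(θ-8*r)) with hudef
  set v : ℝ := Real.sqrt D with hvdef
  have hu0 : 0 < u := Real.sqrt_pos.2 (by positivity)
  have hv0 : 0 < v := Real.sqrt_pos.2 hD0
  have hu2 : u^2 = θ*(θ-8*r) := Real.sq_sqrt (by positivity)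
  have hv2 : v^2 = D := Real.sq_sqrt hD0.le
  have hsqrt : Real.sqrt (θ*(θ - 8*r)*(4*a*θ*γ^2 + a^2*(θ + κ^2)^2)) = u*v := by
    rw [hudef, hvdef, ← Real.sqrt_mul (by positivity)]
  set w : ℝ := Real.sqrt ((θ-8*r)/(4*a)) with hwdef
  have hw0 : 0 < w := Real.sqrt_pos.2 (by positivity)
  have hw2 : w^2 = (θ-8*r)/(4*a) := Real.sq_sqrt (by positivity)
  have hlam : lamMin θ r a = -w := rfl
  clear_value D u v w
  have hf : ∀ l : ℝ, Eminus θ r a ρ l + l * γ - κ^2 * psiPlus θ r a l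
      = ρ + (θ - κ^2)/4 + l*γ - (θ+κ^2)/(4*θ) * Real.sqrt (θ*(θ - 8*r - 4*a*l^2)) := by
    intro l
    unfold Eminus psiMinus psiPlus muLam
    field_simp
    ring
  rw [hDdef, hsqrt]
  constructor
  · rintro x ⟨l, ⟨hl1, hl2⟩, rfl⟩
    rw [hlam] at hl1
    simp only
    rw [hf]
    set t : ℝ := Real.sqrt (θ*(θ - 8*r - 4*a*l^2)) with htdef
    have hl2' : l^2 < (θ-8*r)/(4*a) := by nlinarith
    have hl2'' : 4*a*l^2 < θ - 8*r := by
      have := (lt_div_iff₀ (by positivity : (0:ℝ) < 4*a)).1 hl2'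
      linarith
    have ht0 : 0 ≤ t := Real.sqrt_nonneg _
    have ht2 : t^2 = θ*(θ - 8*r - 4*a*l^2) :=
      Real.sq_sqrt (mul_nonneg hθ0.le (by linarith))
    clear_value t
    have hX0 : 0 ≤ a*(θ+κ^2)*t - 4*θ*a*γ*l := by
      have h1 : 0 ≤ a*(θ+κ^2)*t := by positivity
      have h2 : 4*θ*a*γ*l ≤ 0 :=
        mul_nonpos_iff.2 (Or.inl ⟨by positivity, hl2.le⟩)
      linarith
    have hXsq : (a*(θ+κ^2)*t - 4*θ*a*γ*l)^2 ≤ (u*v)^2 := by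
      have hid : (u*v)^2 - (a*(θ+κ^2)*t - 4*θ*a*γ*l)^2
          = 4*θ*a*(γ*t + a*(θ+κ^2)*l)^2 := by
        linear_combination v^2 * hu2 + (θ*(θ-8*r)) * hv2
          - (a^2*(θ+κ^2)^2 + 4*θ*a*γ^2) * ht2 + (θ*(θ-8*r)) * hDdef
      have h3 := mul_nonneg (by positivity : (0:ℝ) ≤ 4*θ*a) (sq_nonneg (γ*t + a*(θ+κ^2)*l))
      linarith
    have key : a*(θ+κ^2)*t - 4*θ*a*γ*l ≤ u*v := by
      nlinarith [mul_pos hu0 hv0, sq_nonneg (u*v - (a*(θ+κ^2)*t - 4*θ*a*γ*l))]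
    have heq : ρ + (θ - κ^2)/4 + l*γ - (θ+κ^2)/(4*θ) * t
        - (ρ + (θ - κ^2)/4 - 1/(4*θ*a)*(u*v))
        = (u*v - (a*(θ+κ^2)*t - 4*θ*a*γ*l))/(4*θ*a) := by
      field_simp
      ring
    linarith [div_nonneg (sub_nonneg.2 key) (by positivity : (0:ℝ) ≤ 4*θ*a), heq]
  · intro lb hlb
    set p : ℝ := -(γ*u)/v with hpdef
    have hpv : p * v = -(γ*u) := by
      rw [hpdef]; field_simp
    have hp0 : p ≤ 0 := by
      rw [hpdef]
      apply div_nonpos_of_nonpos_of_nonneg _ hv0.le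
      nlinarith
    have hpv2 : p^2*v^2 = γ^2*u^2 := by
      rw [← mul_pow, hpv]; ring
    clear_value p
    have hw2' : 4*a*w^2 = θ - 8*r := by
      rw [hw2]; field_simp
    have hpw : -w < p := by
      by_contra hcon
      push_neg at hcon
      have h1 : w^2 ≤ p^2 := by nlinarith
      have h2 : w^2*v^2 ≤ γ^2*u^2 := by
        nlinarith [mul_le_mul_of_nonneg_right h1 (sq_nonneg v)]
      have h5 : (θ-8*r)*D ≤ 4*a*γ^2*(θ*(θ-8*r)) := by
        calc (θ-8*r)*D = 4*a*(w^2*v^2) := by rw [← hw2', ← hv2]; ring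
          _ ≤ 4*a*(γ^2*u^2) := by nlinarith [h2]
          _ = 4*a*γ^2*(θ*(θ-8*r)) := by rw [hu2]; ring
      rw [hDdef] at h5
      have h6 : 0 < (θ-8*r)*(a^2*(θ+κ^2)^2) := by positivity
      nlinarith [h5, h6]
    have hcont : Continuous (fun l => Eminus θ r a ρ l + l * γ - κ^2 * psiPlus θ r a l) := by
      unfold Eminus psiMinus psiPlus muLam
      have hsq : Continuous fun l : ℝ => Real.sqrt (θ*(θ - 8*r - 4*a*l^2)) :=
        Real.continuous_sqrt.comp (by fun_prop)
      fun_prop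
    have hpmem : p ∈ closure (Set.Ioo (lamMin θ r a) 0) := by
      rw [closure_Ioo (by rw [hlam]; linarith : lamMin θ r a ≠ 0)]
      exact ⟨by rw [hlam]; exact hpw.le, hp0⟩
    have hmem : (fun l => Eminus θ r a ρ l + l * γ - κ^2 * psiPlus θ r a l) p
        ∈ closure ((fun l => Eminus θ r a ρ l + l * γ - κ^2 * psiPlus θ r a l) ''
          Set.Ioo (lamMin θ r a) 0) :=
      image_closure_subset_closure_image hcont (Set.mem_image_of_mem _ hpmem)
    have hlb' : lb ∈ lowerBounds (closure ((fun l => Eminus θ r a ρ l + l * γ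
        - κ^2 * psiPlus θ r a l) '' Set.Ioo (lamMin θ r a) 0)) := by
      rwa [lowerBounds_closure]
    have hfp : (fun l => Eminus θ r a ρ l + l * γ - κ^2 * psiPlus θ r a l) p
        = ρ + (θ - κ^2)/4 - 1/(4*θ*a)*(u*v) := by
      simp only
      rw [hf]
      have htp : Real.sqrt (θ*(θ - 8*r - 4*a*p^2)) = a*(θ+κ^2)*u/v := by
        have h1 : θ*(θ - 8*r - 4*a*p^2) = (a*(θ+κ^2)*u/v)^2 := by
          rw [div_pow, eq_div_iff (by positivity : v^2 ≠ 0)]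
          linear_combination (-4*a*θ)*hpv2 + (θ*(θ-8*r))*hv2 + (θ*(θ-8*r))*hDdef
            - (4*a*θ*γ^2 + a^2*(θ+κ^2)^2)*hu2
        rw [h1, Real.sqrt_sq (by positivity)]
      rw [htp]
      field_simp [hv0.ne']
      linear_combination 4*θ*a*γ*hpv + u*hv2 + u*hDdef
    exact hfp ▸ hlb' hmem
end

section
/- With parameters as above and γ > 0, κ ≥ 0, the infimum of E_λ⁻ + λγ - κ²ψ_λ⁺ over λ ∈ (λ_min, 0) is attained at λ̄(γ,κ) = -γ√(θ(θ-8r)/(a²(κ²+θ)² + 4aγ²θ)), and λ̄(γ,κ) ∈ (λ_min, 0). -/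
noncomputable def lamBar (θ r a γ κ : ℝ) : ℝ :=
  -γ * Real.sqrt (θ*(θ - 8*r)/(a^2*(κ^2 + θ)^2 + 4*a*γ^2*θ))

private lemma key_ineq (A B u v lb l : ℝ) (hA : 0 < A) (hB : 0 < B)
    (hu : 0 < u) (hv : 0 < v) (hu2 : u^2 = A - B*lb^2) (hv2 : v^2 = A - B*l^2) :
    u*v ≤ A - B*lb*l := by
  have h1 : 0 < A - B*lb*l := by
    nlinarith [sq_nonneg (lb - l), pow_pos hu 2, pow_pos hv 2]
  have huv : (u*v)^2 = (A - B*lb^2)*(A - B*l^2) := by rw [mul_pow, hu2, hv2]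
  nlinarith [huv, h1, mul_pos hu hv, add_pos (mul_pos hu hv) h1,
    mul_nonneg (mul_pos hA hB).le (sq_nonneg (lb - l))]

theorem stmt3 (θ r a ρ : ℝ) (hr : 0 ≤ r) (hθ : 8*r < θ) (ha : 0 < a) (hρ : 0 ≤ ρ)
    (γ κ : ℝ) (hγ : 0 < γ) (hκ : 0 ≤ κ) :
    lamBar θ r a γ κ ∈ Set.Ioo (lamMin θ r a) 0 ∧
    IsLeast ((fun l => Eminus θ r a ρ l + l * γ - κ^2 * psiPlus θ r a l) ''
        Set.Ioo (lamMin θ r a) 0)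
      (Eminus θ r a ρ (lamBar θ r a γ κ) + lamBar θ r a γ κ * γ -
        κ^2 * psiPlus θ r a (lamBar θ r a γ κ)) := by
  have hθ0 : 0 < θ := by linarith
  have h8r : 0 < θ - 8*r := by linarith
  have hκθ : 0 < κ^2 + θ := by positivity
  have hD : 0 < a^2*(κ^2 + θ)^2 + 4*a*γ^2*θ := by positivity
  have hA : 0 < θ*(θ - 8*r) := by positivity
  set s := Real.sqrt (θ*(θ - 8*r)/(a^2*(κ^2 + θ)^2 + 4*a*γ^2*θ)) with hsdef
  have hs0 : 0 < s := Real.sqrt_pos.mpr (by positivity)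
  have hs2 : (a^2*(κ^2 + θ)^2 + 4*a*γ^2*θ) * s^2 = θ*(θ - 8*r) := by
    rw [hsdef, Real.sq_sqrt (by positivity : (0:ℝ) ≤ θ*(θ - 8*r)/(a^2*(κ^2 + θ)^2 + 4*a*γ^2*θ))]
    field_simp
  have hlb : lamBar θ r a γ κ = -γ * s := by rw [lamBar, hsdef]
  have hw0 : 0 < a*(κ^2 + θ)*s := by positivity
  -- membership
  have hmem : lamBar θ r a γ κ ∈ Set.Ioo (lamMin θ r a) 0 := by
    rw [hlb]
    constructor
    · rw [lamMin]
      have h1 : γ * s < Real.sqrt ((θ - 8*r)/(4*a)) := by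
        rw [show γ * s = Real.sqrt ((γ*s)^2) by
          rw [Real.sqrt_sq (by positivity)]]
        apply Real.sqrt_lt_sqrt (by positivity)
        rw [lt_div_iff₀ (by positivity : (0:ℝ) < 4*a)]
        nlinarith [hs2, pow_pos hs0 2, hθ0,
          mul_pos (mul_pos (pow_pos ha 2) (pow_pos hκθ 2)) (pow_pos hs0 2)]
      linarith [neg_lt_neg h1]
    · nlinarith [mul_pos hγ hs0]
  refine ⟨hmem, ⟨⟨lamBar θ r a γ κ, hmem, rfl⟩, ?_⟩⟩
  rintro y ⟨l, ⟨hl1, hl2⟩, rfl⟩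
  simp only
  -- facts about l
  have hlsq : l^2 < (θ - 8*r)/(4*a) := by
    have h1 : -l < Real.sqrt ((θ - 8*r)/(4*a)) := by
      rw [lamMin] at hl1; linarith
    have := Real.lt_sqrt (by linarith : (0:ℝ) ≤ -l) |>.mp h1
    nlinarith
  have hvarg : 0 < θ*(θ - 8*r - 4*a*l^2) := by
    have : 4*a*l^2 < θ - 8*r := by
      rw [lt_div_iff₀ (by positivity : (0:ℝ) < 4*a)] at hlsq; linarith [hlsq]
    exact mul_pos hθ0 (by linarith)
  set vl := Real.sqrt (θ*(θ - 8*r - 4*a*l^2)) with hvldef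
  have hv0 : 0 < vl := Real.sqrt_pos.mpr hvarg
  have hv2 : vl^2 = θ*(θ - 8*r - 4*a*l^2) := Real.sq_sqrt hvarg.le
  have hkey : (a*(κ^2 + θ)*s) * vl ≤ θ*(θ - 8*r) - (4*a*θ)*(-γ*s)*l := by
    apply key_ineq (θ*(θ - 8*r)) (4*a*θ) _ _ (-γ*s) l hA (by positivity) hw0 hv0
    · linear_combination hs2
    · linear_combination hv2
  -- rewrite muLams
  have hmul : muLam θ r a l = vl/2 := by rw [muLam, hvldef]; ring
  have hmuL : muLam θ r a (lamBar θ r a γ κ) = a*(κ^2 + θ)*s/2 := by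
    rw [hlb, muLam]
    have harg : θ*(θ - 8*r - 4*a*(-γ*s)^2) = (a*(κ^2 + θ)*s)^2 := by
      linear_combination -hs2
    rw [harg, Real.sqrt_sq hw0.le]; ring
  rw [Eminus, Eminus, psiMinus, psiMinus, psiPlus, psiPlus, hmuL, hmul, ← sub_nonneg]
  have hre : ρ + θ * (1/4 - vl/2 / (2*θ)) + l * γ - κ^2 * (1/4 + vl/2 / (2*θ)) -
      (ρ + θ * (1/4 - a*(κ^2 + θ)*s/2 / (2*θ)) + lamBar θ r a γ κ * γ -
        κ^2 * (1/4 + a*(κ^2 + θ)*s/2 / (2*θ))) =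
      (4*θ*γ*(l + γ*s) + (θ + κ^2)*(a*(κ^2 + θ)*s - vl)) / (4*θ) := by
    rw [hlb]; field_simp; ring
  rw [hre]
  apply div_nonneg _ (by positivity)
  have h3 : (κ^2 + θ)*((a*(κ^2 + θ)*s) * vl) ≤
      (κ^2 + θ)*(θ*(θ - 8*r) - (4*a*θ)*(-γ*s)*l) :=
    mul_le_mul_of_nonneg_left hkey hκθ.le
  have h4 : (κ^2 + θ)*((a^2*(κ^2 + θ)^2 + 4*a*γ^2*θ) * s^2) = (κ^2 + θ)*(θ*(θ - 8*r)) := by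
    rw [hs2]
  have h5 : (4*θ*γ*(l + γ*s) + (θ + κ^2)*(a*(κ^2 + θ)*s - vl)) * (a*(κ^2 + θ)*s)
      = (κ^2 + θ)*((θ*(θ - 8*r) - (4*a*θ)*(-γ*s)*l) - (a*(κ^2 + θ)*s) * vl)
        + ((κ^2 + θ)*((a^2*(κ^2 + θ)^2 + 4*a*γ^2*θ) * s^2) - (κ^2 + θ)*(θ*(θ - 8*r))) := by
    ring
  have h6 : 0 ≤ (4*θ*γ*(l + γ*s) + (θ + κ^2)*(a*(κ^2 + θ)*s - vl)) * (a*(κ^2 + θ)*s) := by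
    rw [h5]; linarith [h3, h4]
  exact le_of_mul_le_mul_right (by linarith [h6]) hw0
end

section
/- Let θ > 8r > 0, a > 0 and for β, κ ≥ 0 define Θ(β,κ) := sup_{λ∈(λ_min,0)} {κ²ψ_λ⁺ - λβ}. Then Θ(β,κ) = κ²/4 + √(θ(θ-8r)(a²κ⁴ + 4aθβ²))/(4aθ). -/
set_option maxHeartbeats 1000000 in
theorem stmt4 (θ r a : ℝ) (hr : 0 < r) (hθ : 8*r < θ) (ha : 0 < a)
    (β κ : ℝ) (hβ : 0 ≤ β) (hκ : 0 ≤ κ) :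
    IsLUB ((fun l => κ^2 * psiPlus θ r a l - l * β) '' Set.Ioo (lamMin θ r a) 0)
      (κ^2/4 + Real.sqrt (θ*(θ - 8*r)*(a^2*κ^4 + 4*a*θ*β^2))/(4*a*θ)) := by
  have hθ0 : 0 < θ := by linarith
  have hm : 0 < θ - 8*r := by linarith
  set f : ℝ → ℝ := fun l => κ^2 * psiPlus θ r a l - l * β with hfdef
  set Tv : ℝ := Real.sqrt (θ*(θ - 8*r)*(a^2*κ^4 + 4*a*θ*β^2)) with hTvdef
  set S : ℝ := κ^2/4 + Tv/(4*a*θ) with hSdef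
  have hTv0 : 0 ≤ Tv := Real.sqrt_nonneg _
  have hTv2 : Tv^2 = θ*(θ - 8*r)*(a^2*κ^4 + 4*a*θ*β^2) := by
    rw [hTvdef]; exact Real.sq_sqrt (by positivity)
  have hlneg : lamMin θ r a < 0 := by
    rw [lamMin, neg_lt, neg_zero]
    exact Real.sqrt_pos.mpr (by positivity)
  have hlm2 : (lamMin θ r a)^2 = (θ - 8*r)/(4*a) := by
    rw [lamMin, neg_pow]
    simp [Real.sq_sqrt (le_of_lt (by positivity : (0:ℝ) < (θ - 8*r)/(4*a)))]
  have h4 : (0:ℝ) < 4*a*θ := by positivity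
  -- value formula
  have hfval : ∀ l : ℝ,
      f l = κ^2/4 + (a*κ^2*Real.sqrt (θ*(θ - 8*r - 4*a*l^2)) - 4*a*θ*l*β)/(4*a*θ) := by
    intro l
    rw [hfdef]
    simp only [psiPlus, muLam]
    field_simp
    ring
  -- upper bound on the closed interval
  have hub : ∀ l ∈ Set.Icc (lamMin θ r a) 0, f l ≤ S := by
    intro l hl
    obtain ⟨hl1, hl2⟩ := hl
    have hl2sq : l^2 ≤ (θ - 8*r)/(4*a) := by
      nlinarith [hlm2, hlneg]
    set s : ℝ := Real.sqrt (θ*(θ - 8*r - 4*a*l^2)) with hsdef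
    have hs0 : 0 ≤ s := Real.sqrt_nonneg _
    have harg : 0 ≤ θ - 8*r - 4*a*l^2 := by
      have := mul_le_mul_of_nonneg_left hl2sq (le_of_lt (by positivity : (0:ℝ) < 4*a))
      rw [mul_div_cancel₀ _ (by positivity : (4:ℝ)*a ≠ 0)] at this
      linarith
    have hs2 : s^2 = θ*(θ - 8*r - 4*a*l^2) := Real.sq_sqrt (by positivity)
    have hX0 : 0 ≤ a*κ^2*s - 4*a*θ*l*β := by
      have h1 : 0 ≤ a*κ^2*s := by positivity
      have h2 : 0 ≤ 4*a*θ*(-l)*β := by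
        have : 0 ≤ -l := by linarith
        positivity
      nlinarith
    have hident : Tv^2 - (a*κ^2*s - 4*a*θ*l*β)^2 = 4*a*θ*(a*κ^2*l + β*s)^2 := by
      linear_combination hTv2 - (a^2*κ^4 + 4*a*θ*β^2) * hs2
    have hXsq : (a*κ^2*s - 4*a*θ*l*β)^2 ≤ Tv^2 := by
      nlinarith [sq_nonneg (a*κ^2*l + β*s)]
    have key : a*κ^2*s - 4*a*θ*l*β ≤ Tv := by
      rw [← Real.sqrt_sq hX0, ← Real.sqrt_sq hTv0]
      exact Real.sqrt_le_sqrt hXsq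
    rw [hfval l, hSdef]
    exact add_le_add_right ((div_le_div_iff_of_pos_right h4).mpr key) _
  -- attainment on the closed interval
  have hatt : ∃ p ∈ Set.Icc (lamMin θ r a) 0, f p = S := by
    by_cases hD : a*κ^4 + 4*θ*β^2 = 0
    · have hk4 : a * κ^4 = 0 := by
        have h1 : 0 ≤ a * κ^4 := by positivity
        have h2 : 0 ≤ 4*θ*β^2 := by positivity
        linarith
      have hκ0 : κ = 0 := by
        have h3 : κ^4 = 0 := (mul_eq_zero.mp hk4).resolve_left (ne_of_gt ha)
        exact pow_eq_zero_iff (by norm_num : (4:ℕ) ≠ 0) |>.mp h3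
      have hβ0 : β = 0 := by
        have h4 : (4*θ)*β^2 = 0 := by linarith
        have h5 : β^2 = 0 := (mul_eq_zero.mp h4).resolve_left (by positivity)
        exact pow_eq_zero_iff (by norm_num : (2:ℕ) ≠ 0) |>.mp h5
      refine ⟨0, ⟨le_of_lt hlneg, le_refl 0⟩, ?_⟩
      have hTvz : Tv = 0 := by
        rw [hTvdef, hκ0, hβ0]; simp
      rw [hfdef, hSdef, hTvz, hκ0]
      simp
    · have hDpos : 0 < a*(a*κ^4 + 4*θ*β^2) := by
        have h1 : 0 ≤ a*κ^4 + 4*θ*β^2 := by positivity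
        have h2 : 0 < a*κ^4 + 4*θ*β^2 := lt_of_le_of_ne h1 (Ne.symm hD)
        positivity
      have hDne : a*(a*κ^4 + 4*θ*β^2) ≠ 0 := ne_of_gt hDpos
      set w : ℝ := θ*(θ - 8*r)*β^2/(a*(a*κ^4 + 4*θ*β^2)) with hwdef
      have hw0 : 0 ≤ w := by positivity
      set p : ℝ := -Real.sqrt w with hpdef
      have hp2 : p^2 = w := by
        rw [hpdef, neg_pow]; simp [Real.sq_sqrt hw0]
      have hwle : w ≤ (θ - 8*r)/(4*a) := by
        rw [hwdef, div_le_div_iff₀ hDpos (by positivity)]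
        nlinarith [mul_nonneg hm.le (mul_nonneg (sq_nonneg a) (pow_nonneg hκ 4))]
      have hp0 : p ≤ 0 := by
        rw [hpdef]; simp [Real.sqrt_nonneg]
      have hpmem : p ∈ Set.Icc (lamMin θ r a) 0 := by
        refine ⟨?_, hp0⟩
        rw [hpdef, lamMin]
        exact neg_le_neg (Real.sqrt_le_sqrt hwle)
      have hp2le : p^2 ≤ (θ - 8*r)/(4*a) := by rw [hp2]; exact hwle
      set s : ℝ := Real.sqrt (θ*(θ - 8*r - 4*a*p^2)) with hsdef
      have hs0 : 0 ≤ s := Real.sqrt_nonneg _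
      have harg : 0 ≤ θ - 8*r - 4*a*p^2 := by
        have := mul_le_mul_of_nonneg_left hp2le (le_of_lt (by positivity : (0:ℝ) < 4*a))
        rw [mul_div_cancel₀ _ (by positivity : (4:ℝ)*a ≠ 0)] at this
        linarith
      have hs2 : s^2 = θ*(θ - 8*r - 4*a*p^2) := Real.sq_sqrt (by positivity)
      have hcross_sq : (β*s)^2 = (-(a*κ^2*p))^2 := by
        have hweq : w * (a*(a*κ^4 + 4*θ*β^2)) = θ*(θ - 8*r)*β^2 := by
          rw [hwdef]; exact div_mul_cancel₀ _ hDne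
        linear_combination β^2 * hs2 - (4*a*θ*β^2 + a^2*κ^4) * hp2 - hweq
      have hcross : β*s = -(a*κ^2*p) := by
        have h1 : 0 ≤ β*s := mul_nonneg hβ hs0
        have h2 : 0 ≤ -(a*κ^2*p) := by
          have h3 : 0 ≤ -p := by linarith
          have h4 := mul_nonneg (mul_nonneg ha.le (sq_nonneg κ)) h3
          have h5 : a*κ^2*(-p) = -(a*κ^2*p) := by ring
          linarith
        rw [← Real.sqrt_sq h1, ← Real.sqrt_sq h2, hcross_sq]
      have hzero : a*κ^2*p + β*s = 0 := by linarith
      have hX0 : 0 ≤ a*κ^2*s - 4*a*θ*p*β := by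
        have h1 : 0 ≤ a*κ^2*s := by positivity
        have h2 : 0 ≤ 4*a*θ*(-p)*β := by
          have : 0 ≤ -p := by linarith
          positivity
        nlinarith
      have hident : Tv^2 - (a*κ^2*s - 4*a*θ*p*β)^2 = 4*a*θ*(a*κ^2*p + β*s)^2 := by
        linear_combination hTv2 - (a^2*κ^4 + 4*a*θ*β^2) * hs2
      have hX2 : (a*κ^2*s - 4*a*θ*p*β)^2 = Tv^2 := by
        linear_combination (-1) * hident - 4*a*θ*(a*κ^2*p + β*s) * hzero
      have hXTv : a*κ^2*s - 4*a*θ*p*β = Tv := by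
        rw [← Real.sqrt_sq hX0, ← Real.sqrt_sq hTv0, hX2]
      refine ⟨p, hpmem, ?_⟩
      rw [hfval p, ← hsdef, hXTv, hSdef]
  -- continuity
  have hcont : Continuous f := by
    rw [hfdef]
    simp only [psiPlus, muLam]
    fun_prop
  constructor
  · rintro x ⟨l, hl, rfl⟩
    exact hub l (Set.Ioo_subset_Icc_self hl)
  · intro b hb
    obtain ⟨p, hp, hfp⟩ := hatt
    have hScl : S ∈ closure (f '' Set.Ioo (lamMin θ r a) 0) := by
      have h1 : f '' Set.Icc (lamMin θ r a) 0 ⊆ closure (f '' Set.Ioo (lamMin θ r a) 0) := by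
        rw [← closure_Ioo (ne_of_lt hlneg)]
        exact image_closure_subset_closure_image hcont
      exact hfp ▸ h1 ⟨p, hp, rfl⟩
    have h2 : closure (f '' Set.Ioo (lamMin θ r a) 0) ⊆ Set.Iic b :=
      closure_minimal (fun x hx => hb hx) isClosed_Iic
    exact h2 hScl
end

section
/- Let θ > 8r > 0, a > 0, r, ρ ≥ 0 and c_λ⁻ := -E_λ⁻/λ for λ ∈ (λ_min, 0). Then inf_{λ∈(λ_min,0)} c_λ⁻ = √(2a(r + ρ + 2(2r+ρ)²/(θ-8r))), attained at λ̃(θ) = -√(2(θ-8r)(θρ+2ρ²+rθ)/(a(θ+4ρ)²)) ∈ (λ_min, 0). -/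
set_option maxHeartbeats 1000000


noncomputable def cMinus (θ r a ρ l : ℝ) : ℝ := -(Eminus θ r a ρ l) / l
noncomputable def lamTilde (θ r a ρ : ℝ) : ℝ :=
  -Real.sqrt (2*(θ - 8*r)*(θ*ρ + 2*ρ^2 + r*θ)/(a*(θ + 4*ρ)^2))

theorem stmt8 (θ r a ρ : ℝ) (hr : 0 < r) (hθ : 8*r < θ) (ha : 0 < a) (hρ : 0 ≤ ρ) :
    lamTilde θ r a ρ ∈ Set.Ioo (lamMin θ r a) 0 ∧
    IsLeast ((fun l => cMinus θ r a ρ l) '' Set.Ioo (lamMin θ r a) 0)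
      (Real.sqrt (2*a*(r + ρ + 2*(2*r + ρ)^2/(θ - 8*r)))) ∧
    cMinus θ r a ρ (lamTilde θ r a ρ) =
      Real.sqrt (2*a*(r + ρ + 2*(2*r + ρ)^2/(θ - 8*r))) := by
  have hθ0 : 0 < θ := by linarith
  have hB : 0 < θ - 8*r := by linarith
  have hA : 0 < θ + 4*ρ := by linarith
  set M := Real.sqrt (2*a*(r + ρ + 2*(2*r + ρ)^2/(θ - 8*r))) with hMdef
  have hMarg : 0 ≤ 2*a*(r + ρ + 2*(2*r + ρ)^2/(θ - 8*r)) := by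
    have h1 : 0 ≤ 2*(2*r + ρ)^2/(θ - 8*r) := div_nonneg (by positivity) hB.le
    nlinarith
  have hM0 : 0 ≤ M := Real.sqrt_nonneg _
  have hM2 : M^2 = 2*a*(r + ρ + 2*(2*r + ρ)^2/(θ - 8*r)) := Real.sq_sqrt hMarg
  have hBM2 : (θ-8*r)*M^2 = 2*a*((r+ρ)*(θ-8*r) + 2*(2*r+ρ)^2) := by
    rw [hM2]; field_simp; try ring
  -- general facts for l in the interval
  have hrep : ∀ l ∈ Set.Ioo (lamMin θ r a) 0,
      cMinus θ r a ρ l = (ρ + θ/4 - Real.sqrt (θ*(θ - 8*r - 4*a*l^2))/4)/(-l) ∧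
      M ≤ cMinus θ r a ρ l := by
    rintro l ⟨hl1, hl2⟩
    have hlneg : 0 < -l := by linarith
    have hsq : l^2 < (θ - 8*r)/(4*a) := by
      have h1 : -l < Real.sqrt ((θ - 8*r)/(4*a)) := by
        have := hl1; unfold lamMin at this; linarith
      have h2 : (-l)^2 < (Real.sqrt ((θ - 8*r)/(4*a)))^2 :=
        pow_lt_pow_left₀ h1 hlneg.le (by norm_num)
      have h3 : (Real.sqrt ((θ - 8*r)/(4*a)))^2 = (θ - 8*r)/(4*a) :=
        Real.sq_sqrt (by positivity)
      nlinarith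
    have harg : 0 < θ - 8*r - 4*a*l^2 := by
      have h4 := (lt_div_iff₀ (by positivity : (0:ℝ) < 4*a)).mp hsq
      nlinarith [h4]
    set Q := Real.sqrt (θ*(θ - 8*r - 4*a*l^2)) with hQdef
    have hQ0 : 0 ≤ Q := Real.sqrt_nonneg _
    have hQ2 : Q^2 = θ*(θ-8*r) - 4*a*θ*l^2 := by
      rw [hQdef, Real.sq_sqrt (by positivity)]; ring
    have hE : Eminus θ r a ρ l = ρ + θ/4 - Q/4 := by
      unfold Eminus psiMinus muLam
      rw [← hQdef]; field_simp; ring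
    have hc : cMinus θ r a ρ l = (ρ + θ/4 - Q/4)/(-l) := by
      unfold cMinus; rw [hE]; rw [div_neg, neg_div]
    refine ⟨hc, ?_⟩
    -- Q < θ + 4ρ (i.e. Q/4 < A)
    have hQlt : Q < θ + 4*ρ := by
      nlinarith [hQ2, hQ0, mul_nonneg (mul_nonneg ha.le hθ0.le) (sq_nonneg l)]
    have key : 16*θ*(θ-8*r)*((ρ+θ/4 - Q/4)^2 - M^2*l^2) =
        (4*(ρ+θ/4)*Q - θ*(θ-8*r))^2 := by
      linear_combination (θ*(θ-8*r) - 16*(ρ+θ/4)^2) * hQ2 - 16*θ*l^2 * hBM2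
    have hdiff : 0 ≤ (ρ+θ/4 - Q/4)^2 - M^2*l^2 := by
      have hx := sq_nonneg (4*(ρ+θ/4)*Q - θ*(θ-8*r))
      rw [← key] at hx
      have hpos : (0:ℝ) < 16*θ*(θ-8*r) := by positivity
      nlinarith [hx, hpos]
    have hApos : 0 < ρ + θ/4 - Q/4 := by linarith
    have hnum : M*(-l) ≤ ρ + θ/4 - Q/4 := by
      nlinarith [hdiff, mul_nonneg hM0 hlneg.le, hApos]
    rw [hc, le_div_iff₀ hlneg]
    linarith
  -- lamTilde facts
  have hXpos : 0 < 2*(θ - 8*r)*(θ*ρ + 2*ρ^2 + r*θ)/(a*(θ + 4*ρ)^2) := by positivity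
  have hsX : 0 < Real.sqrt (2*(θ - 8*r)*(θ*ρ + 2*ρ^2 + r*θ)/(a*(θ + 4*ρ)^2)) :=
    Real.sqrt_pos.mpr hXpos
  have hlt0 : lamTilde θ r a ρ < 0 := by unfold lamTilde; linarith
  have hXlt : 2*(θ - 8*r)*(θ*ρ + 2*ρ^2 + r*θ)/(a*(θ + 4*ρ)^2) < (θ - 8*r)/(4*a) := by
    rw [div_lt_div_iff₀ (by positivity) (by positivity)]
    nlinarith [mul_pos hθ0 hB, mul_pos ha hB, mul_pos (mul_pos ha hB) (mul_pos hθ0 hB)]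
  have hltmin : lamMin θ r a < lamTilde θ r a ρ := by
    unfold lamMin lamTilde
    have := Real.sqrt_lt_sqrt hXpos.le hXlt
    linarith
  have hmem : lamTilde θ r a ρ ∈ Set.Ioo (lamMin θ r a) 0 := ⟨hltmin, hlt0⟩
  have hT2 : lamTilde θ r a ρ ^ 2 = 2*(θ - 8*r)*(θ*ρ + 2*ρ^2 + r*θ)/(a*(θ + 4*ρ)^2) := by
    unfold lamTilde
    rw [neg_pow, Real.sq_sqrt hXpos.le]; ring
  -- value at lamTilde
  have hQt : Real.sqrt (θ*(θ - 8*r - 4*a*(lamTilde θ r a ρ)^2)) = θ*(θ-8*r)/(θ+4*ρ) := by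
    have harg : θ*(θ - 8*r - 4*a*(lamTilde θ r a ρ)^2) = (θ*(θ-8*r)/(θ+4*ρ))^2 := by
      rw [hT2]; field_simp; ring
    rw [harg, Real.sqrt_sq (by positivity)]
  have hval : cMinus θ r a ρ (lamTilde θ r a ρ) = M := by
    obtain ⟨hc, _⟩ := hrep _ hmem
    rw [hc, hQt]
    have hs : -lamTilde θ r a ρ = Real.sqrt (2*(θ - 8*r)*(θ*ρ + 2*ρ^2 + r*θ)/(a*(θ + 4*ρ)^2)) := by
      unfold lamTilde; ring
    rw [hs]
    set s := Real.sqrt (2*(θ - 8*r)*(θ*ρ + 2*ρ^2 + r*θ)/(a*(θ + 4*ρ)^2)) with hsdef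
    have hs2 : s^2 = 2*(θ - 8*r)*(θ*ρ + 2*ρ^2 + r*θ)/(a*(θ + 4*ρ)^2) := Real.sq_sqrt hXpos.le
    have hnum_pos : 0 < ρ + θ/4 - θ*(θ-8*r)/(θ+4*ρ)/4 := by
      rw [sub_pos, div_lt_iff₀ (by positivity : (0:ℝ) < 4)]
      rw [div_lt_iff₀ hA]
      nlinarith
    have hsqeq : (ρ + θ/4 - θ*(θ-8*r)/(θ+4*ρ)/4)^2 = (M*s)^2 := by
      have hMs2 : (M*s)^2 = M^2 * s^2 := by ring
      rw [hMs2, hM2, hs2]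
      field_simp
      ring
    have heq : ρ + θ/4 - θ*(θ-8*r)/(θ+4*ρ)/4 = M*s := by
      have h1 : ρ + θ/4 - θ*(θ-8*r)/(θ+4*ρ)/4 = Real.sqrt ((ρ + θ/4 - θ*(θ-8*r)/(θ+4*ρ)/4)^2) :=
        (Real.sqrt_sq hnum_pos.le).symm
      rw [h1, hsqeq, Real.sqrt_sq (by positivity)]
    rw [heq]
    field_simp
  refine ⟨hmem, ⟨⟨lamTilde θ r a ρ, hmem, hval⟩, ?_⟩, hval⟩
  rintro y ⟨l, hl, rfl⟩
  exact (hrep l hl).2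
end

section
/- Euler–Lagrange optimal path: fix μ > 0, τ > 0, K > 0. Among absolutely continuous paths y : [0,τ] → ℝ with y(0)=0 and y(τ)=K, the functional y ↦ ∫₀^τ ((ẏ(s)+ (θ/2) y(s))²/(2θ) - r y(s)² - (aλ²/2) y(s)²) ds (with μ_λ := (1/2)√(θ(θ-8r-4aλ²)) > 0) is minimized by y_λ(s) = K·sinh(μ_λ s)/sinh(μ_λ τ), and the minimal value equals K²(1/4 + (μ_λ/(2θ))·coth(μ_λ τ)). -/
open intervalIntegral Real

/-- The action functional of the short-climb problem, written in terms of the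
path `y` and its (a.e.) derivative `g`. -/
noncomputable def action (θ r a l τ : ℝ) (y g : ℝ → ℝ) : ℝ :=
  ∫ s in (0:ℝ)..τ, ((g s + (θ/2) * y s)^2/(2*θ) - r * (y s)^2 - (a*l^2/2) * (y s)^2)

open MeasureTheory


lemma swap_aux (τ : ℝ) (hτ : 0 ≤ τ) (f g : ℝ → ℝ)
    (hf : IntervalIntegrable f volume 0 τ) (hg : IntervalIntegrable g volume 0 τ) :
    ∫ s in (0:ℝ)..τ, f s * (∫ u in (0:ℝ)..s, g u) =
      ∫ u in (0:ℝ)..τ, g u * (∫ s in u..τ, f s) := by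
  set ν := volume.restrict (Set.Ioc (0:ℝ) τ) with hν
  have hfν : Integrable f ν := hf.1
  have hgν : Integrable g ν := hg.1
  have hmeas : MeasurableSet {p : ℝ × ℝ | p.2 ≤ p.1} :=
    measurableSet_le measurable_snd measurable_fst
  have hFint : Integrable (fun p : ℝ × ℝ =>
      Set.indicator {p : ℝ × ℝ | p.2 ≤ p.1} (fun p => f p.1 * g p.2) p) (ν.prod ν) :=
    (hfν.mul_prod hgν).indicator hmeas
  have hswap := MeasureTheory.integral_integral_swap
    (f := fun s u => Set.indicator {p : ℝ × ℝ | p.2 ≤ p.1} (fun p => f p.1 * g p.2) (s, u))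
    (μ := ν) (ν := ν) hFint
  have hL : (∫ s, (∫ u, Set.indicator {p : ℝ × ℝ | p.2 ≤ p.1}
        (fun p => f p.1 * g p.2) (s, u) ∂ν) ∂ν) =
      ∫ s in (0:ℝ)..τ, f s * (∫ u in (0:ℝ)..s, g u) := by
    rw [intervalIntegral.integral_of_le hτ]
    apply MeasureTheory.setIntegral_congr_fun measurableSet_Ioc
    intro s hs
    have h1 : (fun u => Set.indicator {p : ℝ × ℝ | p.2 ≤ p.1}
        (fun p => f p.1 * g p.2) (s, u)) =
        Set.indicator (Set.Iic s) (fun u => f s * g u) := by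
      ext u
      by_cases h : u ≤ s
      · simp [Set.indicator_of_mem, h, Set.mem_setOf_eq]
      · simp [Set.indicator_of_notMem, h, Set.mem_setOf_eq]
    dsimp only
    rw [h1, MeasureTheory.integral_indicator measurableSet_Iic, hν,
      Measure.restrict_restrict measurableSet_Iic]
    have h2 : Set.Iic s ∩ Set.Ioc 0 τ = Set.Ioc 0 s := by
      ext u; simp only [Set.mem_inter_iff, Set.mem_Iic, Set.mem_Ioc]
      constructor
      · rintro ⟨h3, h4, h5⟩; exact ⟨h4, h3⟩
      · rintro ⟨h3, h4⟩; exact ⟨h4, h3, le_trans h4 hs.2⟩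
    rw [h2, MeasureTheory.integral_const_mul, ← intervalIntegral.integral_of_le (le_of_lt hs.1)]
  have hR : (∫ u, (∫ s, Set.indicator {p : ℝ × ℝ | p.2 ≤ p.1}
        (fun p => f p.1 * g p.2) (s, u) ∂ν) ∂ν) =
      ∫ u in (0:ℝ)..τ, g u * (∫ s in u..τ, f s) := by
    rw [intervalIntegral.integral_of_le hτ]
    apply MeasureTheory.setIntegral_congr_fun measurableSet_Ioc
    intro u hu
    have h1 : (fun s => Set.indicator {p : ℝ × ℝ | p.2 ≤ p.1}
        (fun p => f p.1 * g p.2) (s, u)) =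
        Set.indicator (Set.Ici u) (fun s => f s * g u) := by
      ext s
      by_cases h : u ≤ s
      · simp [Set.indicator_of_mem, h, Set.mem_setOf_eq]
      · simp [Set.indicator_of_notMem, h, Set.mem_setOf_eq]
    dsimp only
    rw [h1, MeasureTheory.integral_indicator measurableSet_Ici, hν,
      Measure.restrict_restrict measurableSet_Ici]
    have h2 : Set.Ici u ∩ Set.Ioc 0 τ = Set.Icc u τ := by
      ext s; simp only [Set.mem_inter_iff, Set.mem_Ici, Set.mem_Icc, Set.mem_Ioc]
      constructor
      · rintro ⟨h3, _, h5⟩; exact ⟨h3, h5⟩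
      · rintro ⟨h3, h4⟩; exact ⟨h3, lt_of_lt_of_le hu.1 h3, h4⟩
    rw [h2, MeasureTheory.integral_Icc_eq_integral_Ioc,
      ← intervalIntegral.integral_of_le hu.2]
    simp [mul_comm]
  rw [← hL, ← hR]
  exact hswap

lemma contY (τ : ℝ) (hτ : 0 ≤ τ) (g : ℝ → ℝ) (hg : IntervalIntegrable g volume 0 τ) :
    ContinuousOn (fun x => ∫ u in (0:ℝ)..x, g u) (Set.uIcc 0 τ) := by
  apply intervalIntegral.continuousOn_primitive_interval
  rw [Set.uIcc_of_le hτ]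
  exact (intervalIntegrable_iff_integrableOn_Icc_of_le hτ).mp hg

lemma intY (τ : ℝ) (hτ : 0 ≤ τ) (g h : ℝ → ℝ) (hg : IntervalIntegrable g volume 0 τ)
    (hh : IntervalIntegrable h volume 0 τ) :
    IntervalIntegrable (fun s => h s * (∫ u in (0:ℝ)..s, g u)) volume 0 τ :=
  hh.mul_continuousOn (contY τ hτ g hg)

lemma self_aux (τ : ℝ) (hτ : 0 ≤ τ) (g : ℝ → ℝ)
    (hg : IntervalIntegrable g volume 0 τ) :
    ∫ s in (0:ℝ)..τ, g s * (∫ u in (0:ℝ)..s, g u) = (∫ u in (0:ℝ)..τ, g u)^2 / 2 := by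
  have h := swap_aux τ hτ g g hg hg
  have hsub : ∀ u ∈ Set.uIcc (0:ℝ) τ, (∫ s in u..τ, g s) =
      (∫ s in (0:ℝ)..τ, g s) - ∫ s in (0:ℝ)..u, g s := by
    intro u hu
    rw [eq_sub_iff_add_eq, add_comm]
    exact intervalIntegral.integral_add_adjacent_intervals
      (hg.mono_set (Set.uIcc_subset_uIcc Set.left_mem_uIcc hu))
      (hg.mono_set (Set.uIcc_subset_uIcc hu Set.right_mem_uIcc))
  have h2 : (∫ u in (0:ℝ)..τ, g u * (∫ s in u..τ, g s)) =
      ∫ u in (0:ℝ)..τ, (g u * (∫ s in (0:ℝ)..τ, g s) - g u * (∫ s in (0:ℝ)..u, g s)) :=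
    intervalIntegral.integral_congr (fun u hu => by rw [hsub u hu]; ring)
  rw [h2, intervalIntegral.integral_sub (hg.mul_const _) (intY τ hτ g g hg hg),
    intervalIntegral.integral_mul_const] at h
  nlinarith [h]

lemma parts_aux (τ : ℝ) (hτ : 0 ≤ τ) (g φ φ' : ℝ → ℝ)
    (hg : IntervalIntegrable g volume 0 τ)
    (hφ : ∀ x, HasDerivAt φ (φ' x) x) (hφ' : Continuous φ') :
    ∫ s in (0:ℝ)..τ, φ' s * (∫ u in (0:ℝ)..s, g u) =
      φ τ * (∫ u in (0:ℝ)..τ, g u) - ∫ u in (0:ℝ)..τ, φ u * g u := by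
  have hφc : Continuous φ := continuous_iff_continuousAt.mpr (fun x => (hφ x).continuousAt)
  have h := swap_aux τ hτ φ' g (hφ'.intervalIntegrable 0 τ) hg
  have hsub : ∀ u ∈ Set.uIcc (0:ℝ) τ, (∫ s in u..τ, φ' s) = φ τ - φ u := fun u _ =>
    intervalIntegral.integral_eq_sub_of_hasDerivAt (fun x _ => hφ x)
      (hφ'.intervalIntegrable u τ)
  have h2 : (∫ u in (0:ℝ)..τ, g u * (∫ s in u..τ, φ' s)) =
      ∫ u in (0:ℝ)..τ, (g u * φ τ - φ u * g u) :=
    intervalIntegral.integral_congr (fun u hu => by rw [hsub u hu]; ring)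
  rw [h2, intervalIntegral.integral_sub (hg.mul_const _)
      (by simpa [mul_comm] using hg.continuousOn_mul hφc.continuousOn),
    intervalIntegral.integral_mul_const] at h
  rw [h]; ring

noncomputable def Yf (g : ℝ → ℝ) (s : ℝ) : ℝ := ∫ u in (0:ℝ)..s, g u
noncomputable def ysf (μ S K : ℝ) (s : ℝ) : ℝ := K * Real.sinh (μ*s) / S
noncomputable def gsf (μ S K : ℝ) (s : ℝ) : ℝ := K * μ * Real.cosh (μ*s) / S

lemma star_energy (μ τ K : ℝ) (hμ : 0 < μ) (hτ : 0 < τ) :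
    ∫ s in (0:ℝ)..τ, ((K*μ*Real.cosh (μ*s)/Real.sinh (μ*τ))^2
      + μ^2*(K*Real.sinh (μ*s)/Real.sinh (μ*τ))^2)
    = K^2*μ*(Real.cosh (μ*τ)/Real.sinh (μ*τ)) := by
  have hS : 0 < Real.sinh (μ*τ) := by rw [Real.sinh_pos_iff]; positivity
  have hS0 : Real.sinh (μ*τ) ≠ 0 := ne_of_gt hS
  set S := Real.sinh (μ*τ) with hSdef
  have hG : ∀ s : ℝ, HasDerivAt (fun s => K^2*μ/(2*S^2) * Real.sinh (2*μ*s))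
      ((K*μ*Real.cosh (μ*s)/S)^2 + μ^2*(K*Real.sinh (μ*s)/S)^2) s := by
    intro s
    have hinner : HasDerivAt (fun s : ℝ => 2*μ*s) (2*μ) s := by
      simpa using (hasDerivAt_id s).const_mul (2*μ)
    have h := ((Real.hasDerivAt_sinh (2*μ*s)).comp s hinner).const_mul (K^2*μ/(2*S^2))
    refine h.congr_deriv ?_
    have h2 : (2:ℝ)*μ*s = 2*(μ*s) := by ring
    rw [h2, Real.cosh_two_mul]
    have hB := Real.cosh_sq (μ*s)
    field_simp
  have hcont : Continuous (fun s : ℝ => (K*μ*Real.cosh (μ*s)/S)^2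
      + μ^2*(K*Real.sinh (μ*s)/S)^2) := by fun_prop
  rw [intervalIntegral.integral_eq_sub_of_hasDerivAt (fun x _ => hG x)
    (hcont.intervalIntegrable 0 τ)]
  simp only [mul_zero, Real.sinh_zero]
  have h2 : (2:ℝ)*μ*τ = 2*(μ*τ) := by ring
  rw [h2, Real.sinh_two_mul]
  field_simp
  ring

lemma star_deriv (μ S K : ℝ) (s : ℝ) :
    HasDerivAt (ysf μ S K) (gsf μ S K s) s := by
  unfold ysf gsf
  have hinner : HasDerivAt (fun s : ℝ => μ*s) μ s := by
    simpa using (hasDerivAt_id s).const_mul μ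
  have h := (((Real.hasDerivAt_sinh (μ*s)).comp s hinner).const_mul K).div_const S
  refine h.congr_deriv ?_
  ring

lemma star_deriv2 (μ S K : ℝ) (s : ℝ) :
    HasDerivAt (gsf μ S K) (μ^2 * ysf μ S K s) s := by
  unfold ysf gsf
  have hinner : HasDerivAt (fun s : ℝ => μ*s) μ s := by
    simpa using (hasDerivAt_id s).const_mul μ
  have h := (((Real.hasDerivAt_cosh (μ*s)).comp s hinner).const_mul (K*μ)).div_const S
  refine h.congr_deriv ?_
  ring

lemma ysf_cont (μ S K : ℝ) : Continuous (ysf μ S K) := by unfold ysf; fun_prop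
lemma gsf_cont (μ S K : ℝ) : Continuous (gsf μ S K) := by unfold gsf; fun_prop


set_option maxHeartbeats 1000000 in
lemma part1 (θ r a l μ τ K : ℝ) (hθ0 : 0 < θ) (hμ : 0 < μ) (hτ : 0 < τ)
    (hm : μ^2 = θ^2/4 - 2*θ*r - θ*a*l^2)
    (y g : ℝ → ℝ) (hgi : IntervalIntegrable g volume 0 τ)
    (hg2i : IntervalIntegrable (fun s => (g s)^2) volume 0 τ)
    (hy : ∀ s ∈ Set.Icc 0 τ, y s = ∫ u in (0:ℝ)..s, g u)
    (hyK : y τ = K) :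
    action θ r a l τ y g ≥
      K^2*(1/4 + (μ/(2*θ))*(Real.cosh (μ*τ)/Real.sinh (μ*τ))) := by
  have hS : 0 < Real.sinh (μ*τ) := by rw [Real.sinh_pos_iff]; positivity
  set S := Real.sinh (μ*τ) with hSdef
  have hS0 : S ≠ 0 := ne_of_gt hS
  have hU : Set.uIcc (0:ℝ) τ = Set.Icc 0 τ := Set.uIcc_of_le hτ.le
  have hYcont : ContinuousOn (Yf g) (Set.uIcc 0 τ) := contY τ hτ.le g hgi
  have hy' : ∀ s ∈ Set.Icc (0:ℝ) τ, y s = Yf g s := hy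
  have hYK : Yf g τ = K := by rw [← hy' τ ⟨hτ.le, le_refl τ⟩]; exact hyK
  have hyc : Continuous (ysf μ S K) := ysf_cont μ S K
  have hgc : Continuous (gsf μ S K) := gsf_cont μ S K
  have hgsint : IntervalIntegrable (gsf μ S K) volume 0 τ := hgc.intervalIntegrable 0 τ
  have ysf0 : ysf μ S K 0 = 0 := by simp [ysf]
  have ysfτ : ysf μ S K τ = K := by
    rw [ysf, ← hSdef, mul_div_assoc, div_self hS0, mul_one]
  have ysint : ∀ s : ℝ, (∫ u in (0:ℝ)..s, gsf μ S K u) = ysf μ S K s := fun s => by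
    rw [intervalIntegral.integral_eq_sub_of_hasDerivAt (fun x _ => star_deriv μ S K x)
      (hgc.intervalIntegrable 0 s), ysf0, sub_zero]
  have kint : IntervalIntegrable (fun s => g s - gsf μ S K s) volume 0 τ := hgi.sub hgsint
  have hkτ : (∫ u in (0:ℝ)..τ, (g u - gsf μ S K u)) = 0 := by
    rw [intervalIntegral.integral_sub hgi hgsint, ysint τ, ysfτ]
    rw [show (∫ u in (0:ℝ)..τ, g u) = K from hYK]
    ring
  have hsub : ∀ s ∈ Set.uIcc (0:ℝ) τ,
      (∫ u in (0:ℝ)..s, (g u - gsf μ S K u)) = Yf g s - ysf μ S K s := fun s hs => by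
    rw [intervalIntegral.integral_sub
      (hgi.mono_set (Set.uIcc_subset_uIcc Set.left_mem_uIcc hs))
      (hgc.intervalIntegrable 0 s), ysint s]
    rfl
  -- cross term vanishes
  have hcross := parts_aux τ hτ.le (fun s => g s - gsf μ S K s) (gsf μ S K)
    (fun s => μ^2 * ysf μ S K s) kint (fun x => star_deriv2 μ S K x) (by fun_prop)
  rw [hkτ, mul_zero, zero_sub] at hcross
  have hcross2 : (∫ s in (0:ℝ)..τ, (μ^2 * ysf μ S K s) * (Yf g s - ysf μ S K s)) =
      - ∫ u in (0:ℝ)..τ, gsf μ S K u * (g u - gsf μ S K u) := by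
    rw [← hcross]
    exact intervalIntegral.integral_congr (fun s hs => by rw [hsub s hs])
  -- integrability of the pieces
  have i1int : IntervalIntegrable
      (fun s => gsf μ S K s^2 + μ^2 * ysf μ S K s^2) volume 0 τ :=
    ((hgc.pow 2).add (continuous_const.mul (hyc.pow 2))).intervalIntegrable 0 τ
  have i2aint : IntervalIntegrable
      (fun s => (g s - gsf μ S K s) * gsf μ S K s) volume 0 τ :=
    kint.mul_continuousOn hgc.continuousOn
  have i2bint : IntervalIntegrable
      (fun s => (μ^2 * ysf μ S K s) * (Yf g s - ysf μ S K s)) volume 0 τ := by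
    apply ContinuousOn.intervalIntegrable
    exact ((continuousOn_const.mul hyc.continuousOn).mul (hYcont.sub hyc.continuousOn))
  have i2int : IntervalIntegrable
      (fun s => 2*((g s - gsf μ S K s) * gsf μ S K s
        + (μ^2 * ysf μ S K s) * (Yf g s - ysf μ S K s))) volume 0 τ :=
    (i2aint.add i2bint).const_mul 2
  have i3aint : IntervalIntegrable (fun s => (g s - gsf μ S K s)^2) volume 0 τ := by
    have e : (fun s => (g s - gsf μ S K s)^2) =
        fun s => (g s)^2 - g s * (2 * gsf μ S K s) + gsf μ S K s^2 :=
      funext fun s => by ring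
    rw [e]
    exact (hg2i.sub (hgi.mul_continuousOn (continuous_const.mul hgc).continuousOn)).add
      ((hgc.pow 2).intervalIntegrable 0 τ)
  have i3bint : IntervalIntegrable (fun s => μ^2 * (Yf g s - ysf μ S K s)^2) volume 0 τ :=
    (continuousOn_const.mul ((hYcont.sub hyc.continuousOn).pow 2)).intervalIntegrable
  have i3int : IntervalIntegrable
      (fun s => (g s - gsf μ S K s)^2 + μ^2 * (Yf g s - ysf μ S K s)^2) volume 0 τ :=
    i3aint.add i3bint
  have iY2 : IntervalIntegrable (fun s => μ^2 * (Yf g s)^2) volume 0 τ :=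
    (continuousOn_const.mul (hYcont.pow 2)).intervalIntegrable
  -- energy split
  have hsplit : (∫ s in (0:ℝ)..τ, ((g s)^2 + μ^2 * (Yf g s)^2)) =
      (∫ s in (0:ℝ)..τ, (gsf μ S K s^2 + μ^2 * ysf μ S K s^2))
      + ((∫ s in (0:ℝ)..τ, 2*((g s - gsf μ S K s) * gsf μ S K s
          + (μ^2 * ysf μ S K s) * (Yf g s - ysf μ S K s)))
        + (∫ s in (0:ℝ)..τ, ((g s - gsf μ S K s)^2 + μ^2 * (Yf g s - ysf μ S K s)^2))) := by
    rw [← intervalIntegral.integral_add i2int i3int,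
      ← intervalIntegral.integral_add i1int (i2int.add i3int)]
    exact intervalIntegral.integral_congr (fun s hs => by ring)
  have hB0 : (∫ s in (0:ℝ)..τ, 2*((g s - gsf μ S K s) * gsf μ S K s
      + (μ^2 * ysf μ S K s) * (Yf g s - ysf μ S K s))) = 0 := by
    rw [intervalIntegral.integral_const_mul, intervalIntegral.integral_add i2aint i2bint,
      hcross2]
    rw [show (∫ s in (0:ℝ)..τ, (g s - gsf μ S K s) * gsf μ S K s)
        = ∫ u in (0:ℝ)..τ, gsf μ S K u * (g u - gsf μ S K u) from
      intervalIntegral.integral_congr (fun s _ => by ring)]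
    ring
  have hC0 : (0:ℝ) ≤ ∫ s in (0:ℝ)..τ,
      ((g s - gsf μ S K s)^2 + μ^2 * (Yf g s - ysf μ S K s)^2) :=
    intervalIntegral.integral_nonneg hτ.le (fun s _ => by positivity)
  have hA : (∫ s in (0:ℝ)..τ, (gsf μ S K s^2 + μ^2 * ysf μ S K s^2))
      = K^2*μ*(Real.cosh (μ*τ)/S) := star_energy μ τ K hμ hτ
  have hT : (∫ s in (0:ℝ)..τ, ((g s)^2 + μ^2 * (Yf g s)^2)) ≥
      K^2*μ*(Real.cosh (μ*τ)/S) := by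
    rw [hsplit, hA, hB0]
    linarith
  -- action decomposition
  have hgY : (∫ s in (0:ℝ)..τ, g s * Yf g s) = K^2/2 := by
    have h := self_aux τ hτ.le g hgi
    rw [show (∫ u in (0:ℝ)..τ, g u) = K from hYK] at h
    exact h
  have hgYint : IntervalIntegrable (fun s => g s * Yf g s) volume 0 τ :=
    intY τ hτ.le g g hgi hgi
  have hact : action θ r a l τ y g = (1/(2*θ)) * (∫ s in (0:ℝ)..τ, (g s)^2)
      + (1/2)*(∫ s in (0:ℝ)..τ, g s * Yf g s)
      + (μ^2/(2*θ))*(∫ s in (0:ℝ)..τ, (Yf g s)^2) := by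
    rw [action]
    rw [intervalIntegral.integral_congr
      (g := fun s => 1/(2*θ) * (g s)^2 + (1/2)*(g s * Yf g s) + μ^2/(2*θ)*(Yf g s)^2)
      (fun s hs => by
        rw [hy' s (hU ▸ hs)]
        have hθ0' : θ ≠ 0 := ne_of_gt hθ0
        field_simp
        linear_combination (-(4:ℝ)*(Yf g s)^2) * hm)]
    have j3 : IntervalIntegrable (fun s => μ^2/(2*θ)*(Yf g s)^2) volume 0 τ :=
      (continuousOn_const.mul (hYcont.pow 2)).intervalIntegrable
    rw [intervalIntegral.integral_add ((hg2i.const_mul _).add (hgYint.const_mul _)) j3,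
      intervalIntegral.integral_add (hg2i.const_mul _) (hgYint.const_mul _),
      intervalIntegral.integral_const_mul, intervalIntegral.integral_const_mul,
      intervalIntegral.integral_const_mul]
  have hTsum : (∫ s in (0:ℝ)..τ, ((g s)^2 + μ^2 * (Yf g s)^2)) =
      (∫ s in (0:ℝ)..τ, (g s)^2) + μ^2 * (∫ s in (0:ℝ)..τ, (Yf g s)^2) := by
    rw [intervalIntegral.integral_add hg2i iY2, intervalIntegral.integral_const_mul]
  have hEE : K^2*μ*(Real.cosh (μ*τ)/S) ≤
      (∫ s in (0:ℝ)..τ, (g s)^2) + μ^2 * (∫ s in (0:ℝ)..τ, (Yf g s)^2) := by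
    rw [← hTsum]; exact hT
  have h2θ : (0:ℝ) ≤ 1/(2*θ) := by positivity
  have hmul := mul_le_mul_of_nonneg_left hEE h2θ
  rw [hact, hgY, ge_iff_le]
  calc K^2*(1/4 + (μ/(2*θ))*(Real.cosh (μ*τ)/S))
      = K^2/4 + (1/(2*θ))*(K^2*μ*(Real.cosh (μ*τ)/S)) := by ring
    _ ≤ K^2/4 + (1/(2*θ))*((∫ s in (0:ℝ)..τ, (g s)^2)
        + μ^2 * (∫ s in (0:ℝ)..τ, (Yf g s)^2)) := by linarith [hmul]
    _ = (1/(2*θ)) * (∫ s in (0:ℝ)..τ, (g s)^2) + (1/2)*(K^2/2)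
        + (μ^2/(2*θ))*(∫ s in (0:ℝ)..τ, (Yf g s)^2) := by ring

lemma part2 (θ r a l μ τ K : ℝ) (hθ0 : 0 < θ) (hμ : 0 < μ) (hτ : 0 < τ)
    (hm : μ^2 = θ^2/4 - 2*θ*r - θ*a*l^2) :
    action θ r a l τ (fun s => K * Real.sinh (μ*s) / Real.sinh (μ*τ))
      (fun s => K*μ*Real.cosh (μ*s)/Real.sinh (μ*τ)) =
    K^2*(1/4 + (μ/(2*θ))*(Real.cosh (μ*τ)/Real.sinh (μ*τ))) := by
  have hS : 0 < Real.sinh (μ*τ) := by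
    rw [Real.sinh_pos_iff]; positivity
  set S := Real.sinh (μ*τ) with hSdef
  set F : ℝ → ℝ := fun s => K^2/S^2 * (μ/(4*θ) * Real.sinh (2*μ*s) + 1/8 * Real.cosh (2*μ*s))
    with hFdef
  have hF : ∀ s : ℝ, HasDerivAt F
      ((K*μ*Real.cosh (μ*s)/S + (θ/2) * (K * Real.sinh (μ*s) / S))^2/(2*θ)
        - r * (K * Real.sinh (μ*s) / S)^2 - (a*l^2/2) * (K * Real.sinh (μ*s) / S)^2) s := by
    intro s
    have hinner : HasDerivAt (fun s : ℝ => 2*μ*s) (2*μ) s := by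
      simpa using (hasDerivAt_id s).const_mul (2*μ)
    have hsinh : HasDerivAt (fun s : ℝ => Real.sinh (2*μ*s))
        (Real.cosh (2*μ*s) * (2*μ)) s := (Real.hasDerivAt_sinh (2*μ*s)).comp s hinner
    have hcosh : HasDerivAt (fun s : ℝ => Real.cosh (2*μ*s))
        (Real.sinh (2*μ*s) * (2*μ)) s := (Real.hasDerivAt_cosh (2*μ*s)).comp s hinner
    have h0 := ((hsinh.const_mul (μ/(4*θ))).add (hcosh.const_mul (1/8))).const_mul (K^2/S^2)
    refine h0.congr_deriv ?_
    have h2 : ∀ x : ℝ, (2:ℝ)*μ*x = 2*(μ*x) := fun x => by ring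
    rw [h2 s, Real.cosh_two_mul, Real.sinh_two_mul]
    have hB := Real.cosh_sq (μ*s)
    have hS0 : S ≠ 0 := ne_of_gt hS
    field_simp
    linear_combination (128*K^2*Real.sinh (μ*s)^2) * hm
  have hcont : Continuous (fun s : ℝ =>
      ((K*μ*Real.cosh (μ*s)/S + (θ/2) * (K * Real.sinh (μ*s) / S))^2/(2*θ)
        - r * (K * Real.sinh (μ*s) / S)^2 - (a*l^2/2) * (K * Real.sinh (μ*s) / S)^2)) := by
    fun_prop
  rw [action]
  rw [intervalIntegral.integral_eq_sub_of_hasDerivAt (fun x _ => hF x)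
    (hcont.intervalIntegrable 0 τ)]
  rw [hFdef]
  simp only [mul_zero, Real.sinh_zero, Real.cosh_zero]
  have h2 : (2:ℝ)*μ*τ = 2*(μ*τ) := by ring
  rw [h2, Real.cosh_two_mul, Real.sinh_two_mul]
  have hC := Real.cosh_sq (μ*τ)
  have hS0 : S ≠ 0 := ne_of_gt hS
  field_simp
  linear_combination (8*θ*K^2) * hC


theorem stmt12 (θ r a l : ℝ) (hr : 0 ≤ r) (hθ : 8*r < θ) (ha : 0 < a)
    (hl : l ∈ Set.Ioo (lamMin θ r a) 0) (τ K : ℝ) (hτ : 0 < τ) (hK : 0 < K) :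
    (∀ y g : ℝ → ℝ, IntervalIntegrable g MeasureTheory.volume 0 τ →
      IntervalIntegrable (fun s => (g s)^2) MeasureTheory.volume 0 τ →
      (∀ s ∈ Set.Icc 0 τ, y s = ∫ u in (0:ℝ)..s, g u) →
      y τ = K →
      action θ r a l τ y g ≥
        K^2 * (1/4 + (muLam θ r a l/(2*θ)) *
          (Real.cosh (muLam θ r a l * τ) / Real.sinh (muLam θ r a l * τ)))) ∧
    action θ r a l τ
        (fun s => K * Real.sinh (muLam θ r a l * s) / Real.sinh (muLam θ r a l * τ))
        (fun s => K * muLam θ r a l * Real.cosh (muLam θ r a l * s) /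
          Real.sinh (muLam θ r a l * τ)) =
      K^2 * (1/4 + (muLam θ r a l/(2*θ)) *
        (Real.cosh (muLam θ r a l * τ) / Real.sinh (muLam θ r a l * τ))) := by
  obtain ⟨hl1, hl2⟩ := hl
  rw [lamMin] at hl1
  have hX : 0 ≤ (θ - 8*r)/(4*a) := div_nonneg (by linarith) (by linarith)
  have hsq := Real.sq_sqrt hX
  have hlsq : l^2 < (θ - 8*r)/(4*a) := by
    nlinarith [Real.sqrt_nonneg ((θ - 8*r)/(4*a))]
  have hpos : 0 < θ - 8*r - 4*a*l^2 := by
    rw [lt_div_iff₀ (by linarith : (0:ℝ) < 4*a)] at hlsq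
    nlinarith
  have hθ0 : (0:ℝ) < θ := by linarith
  have hμpos : 0 < muLam θ r a l := by
    rw [muLam]
    have : 0 < θ*(θ - 8*r - 4*a*l^2) := by positivity
    positivity
  have hμsq : (muLam θ r a l)^2 = θ*(θ - 8*r - 4*a*l^2)/4 := by
    rw [muLam, mul_pow, Real.sq_sqrt (by positivity)]
    ring
  have hm : (muLam θ r a l)^2 = θ^2/4 - 2*θ*r - θ*a*l^2 := by rw [hμsq]; ring
  constructor
  · intro y g hgi hg2i hy hyK
    exact part1 θ r a l (muLam θ r a l) τ K hθ0 hμpos hτ hm y g hgi hg2i hy hyK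
  · exact part2 θ r a l (muLam θ r a l) τ K hθ0 hμpos hτ hm
end
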